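/- arXiv:1512.02807 — 3 statements merged into one kernel-verified Lean document; each statement's English description precedes it below -/
import Mathlib

section
/- Let ξ ∈ ℝ, α ≠ 0, and 0 < c < 1/(6|α|). Define G(x) = x + α·φ((x-ξ)/c)·(x-ξ)·|x-ξ| where φ(u)=(1+u)^3(1-u)^3 for |u|≤1 and 0 otherwise. Then G'(x) > 0 for all x ∈ ℝ, and G'(x) = 1 for all x with |x-ξ| > c. Consequently G is a bijection from ℝ to ℝ. -/
/-!
Write `u = (x - ξ) / c`. Then `G x = x + α c² h u` with `h u = φ u · u |u|`, and
`φ u = (max (1 - u²) 0)³` is `C¹`, so `G' x = 1 + α c h' u` where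
`h' u = |u| p² (2p - 6u²)`, `p = max (1 - u²) 0`. On `|u| ≤ 1` the three factors are
bounded by `1`, `1` and `6`, whence `|G' - 1| ≤ 6 |α| c < 1`; for `|u| > 1`, `p = 0`.
Outside `[ξ - c, ξ + c]` the map `G` is the identity, so the strictly increasing continuous `G`
tends to `±∞` at `±∞` and is onto.
-/

noncomputable def phi : ℝ → ℝ := fun u => if |u| ≤ 1 then (1+u)^3*(1-u)^3 else 0

noncomputable def Gtrans (ξ α c : ℝ) : ℝ → ℝ :=
  fun x => x + α * phi ((x - ξ)/c) * (x - ξ) * |x - ξ|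

open Filter Topology Asymptotics

theorem hasDerivAt_zero_of_isBigO_pow {f : ℝ → ℝ} {n : ℕ} (hn : 1 < n)
    (hf : f =O[𝓝 0] fun x => x ^ n) : HasDerivAt f 0 0 := by
  have hf0 : f 0 = 0 := hf.eq_zero_imp.self_of_nhds (zero_pow (by omega))
  rw [hasDerivAt_iff_isLittleO_nhds_zero]
  simpa [hf0] using hf.trans_isLittleO (isLittleO_pow_id hn)

theorem hasDerivAt_mul_abs (x : ℝ) : HasDerivAt (fun y => y * |y|) (2 * |x|) x := by
  rcases eq_or_ne x 0 with rfl | hx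
  · simpa using hasDerivAt_zero_of_isBigO_pow one_lt_two
      (IsBigO.of_bound 1 (Eventually.of_forall fun y => by simp [sq]))
  · refine ((hasDerivAt_id' x).fun_mul (hasDerivAt_abs hx)).congr_deriv ?_
    rw [self_mul_sign]
    ring

theorem hasDerivAt_max_zero_pow (n : ℕ) (x : ℝ) :
    HasDerivAt (fun y => max y 0 ^ (n + 2)) ((n + 2) * max x 0 ^ (n + 1)) x := by
  rcases lt_trichotomy x 0 with hx | rfl | hx
  · have hev : (fun _ => (0 : ℝ)) =ᶠ[𝓝 x] fun y => max y 0 ^ (n + 2) := by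
      filter_upwards [eventually_lt_nhds hx] with y hy
      simp [max_eq_right hy.le]
    simpa [max_eq_right hx.le] using (hasDerivAt_const x (0 : ℝ)).congr_of_eventuallyEq hev.symm
  · simpa using hasDerivAt_zero_of_isBigO_pow (by omega : 1 < n + 2)
      (IsBigO.of_bound 1 (Eventually.of_forall fun y => by
        simp only [norm_pow, Real.norm_eq_abs, one_mul]
        have : |max y 0| ≤ |y| := by rcases le_total y 0 with h | h <;> simp [h]
        gcongr))
  · have hev : (fun y => y ^ (n + 2)) =ᶠ[𝓝 x] fun y => max y 0 ^ (n + 2) := by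
      filter_upwards [eventually_gt_nhds hx] with y hy
      simp [max_eq_left hy.le]
    simpa [max_eq_left hx.le] using (hasDerivAt_pow (n + 2) x).congr_of_eventuallyEq hev.symm

theorem max_one_sub_sq_eq_zero {u : ℝ} (hu : 1 < |u|) : max (1 - u ^ 2) 0 = 0 := by
  have : 1 < u ^ 2 := by nlinarith [sq_abs u, abs_nonneg u]
  exact max_eq_right (by linarith)

theorem one_lt_abs_div {c t : ℝ} (hc : 0 < c) (ht : c < |t|) : 1 < |t / c| := by
  rwa [abs_div, abs_of_pos hc, one_lt_div hc]

theorem phi_eq_max_pow (u : ℝ) : phi u = max (1 - u ^ 2) 0 ^ 3 := by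
  unfold phi
  split_ifs with hu
  · have : 0 ≤ 1 - u ^ 2 := by nlinarith [sq_abs u, abs_nonneg u]
    rw [max_eq_left this]
    ring
  · simp [max_one_sub_sq_eq_zero (not_le.mp hu)]

theorem hasDerivAt_phi (u : ℝ) : HasDerivAt phi (-6 * u * max (1 - u ^ 2) 0 ^ 2) u := by
  have hsq : HasDerivAt (fun v : ℝ => 1 - v ^ 2) (-(2 * u)) u := by
    simpa using ((hasDerivAt_pow 2 u).const_sub 1)
  rw [show phi = fun v => max (1 - v ^ 2) 0 ^ 3 from funext phi_eq_max_pow]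
  refine ((hasDerivAt_max_zero_pow 1 (1 - u ^ 2)).comp u hsq).congr_deriv ?_
  push_cast
  ring

noncomputable def bump (u : ℝ) : ℝ := phi u * (u * |u|)

noncomputable def bumpDeriv (u : ℝ) : ℝ :=
  |u| * max (1 - u ^ 2) 0 ^ 2 * (2 * max (1 - u ^ 2) 0 - 6 * u ^ 2)

theorem hasDerivAt_bump (u : ℝ) : HasDerivAt bump (bumpDeriv u) u := by
  refine ((hasDerivAt_phi u).fun_mul (hasDerivAt_mul_abs u)).congr_deriv ?_
  rw [bumpDeriv, phi_eq_max_pow]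
  ring

theorem abs_bumpDeriv_le (u : ℝ) : |bumpDeriv u| ≤ 6 := by
  rcases le_or_gt |u| 1 with hu | hu
  · have hu2 : u ^ 2 ≤ 1 := by nlinarith [sq_abs u, abs_nonneg u]
    have hp : max (1 - u ^ 2) 0 = 1 - u ^ 2 := max_eq_left (by linarith)
    rw [bumpDeriv, hp, abs_mul, abs_mul, abs_abs, abs_sq]
    have h1 : (1 - u ^ 2) ^ 2 ≤ 1 := by nlinarith [sq_nonneg u]
    have h2 : |2 * (1 - u ^ 2) - 6 * u ^ 2| ≤ 6 := by
      rw [abs_le]; constructor <;> nlinarith [sq_nonneg u]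
    calc |u| * (1 - u ^ 2) ^ 2 * |2 * (1 - u ^ 2) - 6 * u ^ 2| ≤ 1 * 1 * 6 := by gcongr
      _ = 6 := by norm_num
  · simp [bumpDeriv, max_one_sub_sq_eq_zero hu]

theorem bumpDeriv_eq_zero {u : ℝ} (hu : 1 < |u|) : bumpDeriv u = 0 := by
  simp [bumpDeriv, max_one_sub_sq_eq_zero hu]

section Gtrans

variable {ξ α c : ℝ}

theorem Gtrans_eq_add_bump (hc : 0 < c) :
    Gtrans ξ α c = fun x => x + α * c ^ 2 * bump ((x - ξ) / c) := by
  ext x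
  simp only [Gtrans, bump, abs_div, abs_of_pos hc]
  field_simp

theorem Gtrans_eq_self (hc : 0 < c) {x : ℝ} (hx : c < |x - ξ|) : Gtrans ξ α c x = x := by
  simp [Gtrans, phi_eq_max_pow, max_one_sub_sq_eq_zero (one_lt_abs_div hc hx)]

theorem hasDerivAt_Gtrans (hc : 0 < c) (x : ℝ) :
    HasDerivAt (Gtrans ξ α c) (1 + α * c * bumpDeriv ((x - ξ) / c)) x := by
  have hu : HasDerivAt (fun y => (y - ξ) / c) (1 / c) x :=
    ((hasDerivAt_id x).sub_const ξ).div_const c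
  rw [Gtrans_eq_add_bump hc]
  have hbump := ((hasDerivAt_bump _).comp x hu).const_mul (α * c ^ 2)
  refine ((hasDerivAt_id' x).fun_add hbump).congr_deriv ?_
  field_simp

theorem Gtrans_deriv_pos (hc : 0 < c) (hc' : c < 1 / (6 * |α|)) (x : ℝ) :
    0 < 1 + α * c * bumpDeriv ((x - ξ) / c) := by
  have h6 : 0 < 6 * |α| := one_div_pos.mp (hc.trans hc')
  have hsmall : 6 * |α| * c < 1 := by rwa [lt_div_iff₀' h6] at hc'
  have hbound : |α * c * bumpDeriv ((x - ξ) / c)| ≤ 6 * |α| * c := by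
    have h := mul_le_mul_of_nonneg_left (abs_bumpDeriv_le ((x - ξ) / c))
      (by positivity : 0 ≤ |α| * c)
    rw [abs_mul, abs_mul, abs_of_pos hc]
    linarith
  linarith [neg_abs_le (α * c * bumpDeriv ((x - ξ) / c))]

theorem tendsto_Gtrans_atTop (hc : 0 < c) : Tendsto (Gtrans ξ α c) atTop atTop :=
  tendsto_id.congr' <| by
    filter_upwards [eventually_gt_atTop (ξ + c)] with x hx
    exact (Gtrans_eq_self hc (show c < |x - ξ| by rw [abs_of_pos (by linarith)]; linarith)).symm

theorem tendsto_Gtrans_atBot (hc : 0 < c) : Tendsto (Gtrans ξ α c) atBot atBot :=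
  tendsto_id.congr' <| by
    filter_upwards [eventually_lt_atBot (ξ - c)] with x hx
    exact (Gtrans_eq_self hc (show c < |x - ξ| by rw [abs_of_neg (by linarith)]; linarith)).symm

end Gtrans

theorem stmt1_general (ξ α c : ℝ) (hc : 0 < c) (hc' : c < 1/(6*|α|)) :
    (∀ x : ℝ, 0 < deriv (Gtrans ξ α c) x) ∧
    (∀ x : ℝ, c < |x - ξ| → deriv (Gtrans ξ α c) x = 1) ∧
    Function.Bijective (Gtrans ξ α c) := by
  have hG := hasDerivAt_Gtrans (ξ := ξ) (α := α) hc
  have hpos := Gtrans_deriv_pos (ξ := ξ) hc hc'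
  refine ⟨fun x => (hG x).deriv ▸ hpos x, fun x hx => ?_, ?_, ?_⟩
  · rw [(hG x).deriv, bumpDeriv_eq_zero (one_lt_abs_div hc hx), mul_zero, add_zero]
  · exact (strictMono_of_hasDerivAt_pos hG hpos).injective
  · exact Continuous.surjective (continuous_iff_continuousAt.mpr fun x => (hG x).continuousAt)
      (tendsto_Gtrans_atTop hc) (tendsto_Gtrans_atBot hc)

theorem stmt1 (ξ α c : ℝ) (hα : α ≠ 0) (hc : 0 < c) (hc' : c < 1/(6*|α|)) :
    (∀ x : ℝ, 0 < deriv (Gtrans ξ α c) x) ∧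
    (∀ x : ℝ, c < |x - ξ| → deriv (Gtrans ξ α c) x = 1) ∧
    Function.Bijective (Gtrans ξ α c) :=
  stmt1_general ξ α c hc hc'
end

section
/- Let f: ℝ^d → ℝ^m be continuous and intrinsic Lipschitz with constant L on ℝ^d \ Θ, where Θ is a set such that for all x, y ∈ ℝ^d the line segment from x to y meets Θ in finitely many points. Then f is Lipschitz on ℝ^d with constant L with respect to the Euclidean metric. -/
open Set

noncomputable def intrinsicDist {E : Type*} [NormedAddCommGroup E]
    (A : Set E) (x y : E) : ENNReal :=
  ⨅ (γ : ℝ → E) (_ : ContinuousOn γ (Icc 0 1)) (_ : MapsTo γ (Icc 0 1) A)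
    (_ : γ 0 = x) (_ : γ 1 = y), eVariationOn γ (Icc 0 1)

/-!
On the segment from `x` to `y`, parametrized by `γ = lineMap x y`, only finitely many parameters
hit `Θ`. On every closed parameter interval avoiding them, the segment between the endpoints
lies in `Θᶜ`, so its length bounds the intrinsic distance, and `f ∘ γ` grows at rate at most
`L * ‖x - y‖`. Continuity carries this bound to intervals that touch bad parameters only at
their ends, and the triangle inequality glues the finitely many pieces.
-/

open AffineMap

section Segment

variable {E : Type*} [NormedAddCommGroup E] [NormedSpace ℝ E]

theorem eVariationOn_lineMap_le (x y : E) :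
    eVariationOn (lineMap x y : ℝ → E) (Icc 0 1) ≤ edist x y := by
  have := ((lipschitzWith_lineMap (𝕜 := ℝ) x y).lipschitzOnWith
    (s := univ)).comp_eVariationOn_le (g := id) (s := Icc 0 1) (mapsTo_univ _ _)
  simpa only [Function.comp_id, eVariationOn_id_Icc, sub_zero, ENNReal.ofReal_one, mul_one,
    coe_nnreal_ennreal_nndist] using this

theorem intrinsicDist_le_edist_of_segment_subset {A : Set E} {x y : E}
    (h : segment ℝ x y ⊆ A) : intrinsicDist A x y ≤ edist x y := by
  have hmaps : MapsTo (lineMap x y : ℝ → E) (Icc 0 1) A := fun t ht =>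
    h (lineMap_mem_segment ℝ x y ht)
  refine le_trans ?_ (eVariationOn_lineMap_le x y)
  exact iInf_le_of_le _ <| iInf_le_of_le (lineMap_continuous (R := ℝ)).continuousOn <|
    iInf_le_of_le hmaps <| iInf_le_of_le (lineMap_apply_zero x y) <|
    iInf_le_of_le (lineMap_apply_one x y) le_rfl

end Segment

section Interval

variable {E : Type*} [PseudoMetricSpace E] {g : ℝ → E} {C a b : ℝ}

theorem dist_le_mul_sub_of_forall_Ioo (hab : a ≤ b) (hg : ContinuousOn g (Icc a b))
    (h : ∀ t s, a < t → t ≤ s → s < b → dist (g t) (g s) ≤ C * (s - t)) :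
    dist (g a) (g b) ≤ C * (b - a) := by
  rcases hab.eq_or_lt with rfl | hab
  · simp
  have hleft : ∀ s ∈ Ioo a b, dist (g a) (g s) ≤ C * (s - a) := by
    intro s hs
    have hg' := hg.mono (Icc_subset_Icc_right hs.2.le)
    refine le_on_closure (f := fun t => dist (g t) (g s)) (g := fun t => C * (s - t))
      (fun t (ht : t ∈ Ioo a s) => h t s ht.1 ht.2.le hs.2) ?_ (by fun_prop) ?_ <;>
      rw [closure_Ioo hs.1.ne]
    · fun_prop
    · exact left_mem_Icc.2 hs.1.le
  refine le_on_closure (f := fun s => dist (g a) (g s)) (g := fun s => C * (s - a)) hleft ?_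
    (by fun_prop) ?_ <;> rw [closure_Ioo hab.ne]
  · fun_prop
  · exact right_mem_Icc.2 hab.le

theorem dist_le_mul_sub_of_finite {S : Set ℝ} (hS : S.Finite) (hab : a ≤ b)
    (hg : ContinuousOn g (Icc a b))
    (h : ∀ t s, a ≤ t → t ≤ s → s ≤ b → Disjoint (Icc t s) S → dist (g t) (g s) ≤ C * (s - t)) :
    dist (g a) (g b) ≤ C * (b - a) := by
  suffices H : ∀ T : Set ℝ, T.Finite → ∀ t s, a ≤ t → t ≤ s → s ≤ b → Ioo t s ∩ S ⊆ T →
      dist (g t) (g s) ≤ C * (s - t) from H S hS a b le_rfl hab le_rfl inter_subset_right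
  -- A new point of `T` inside `(t, s)` splits the interval there.
  intro T hT
  induction T, hT using Set.Finite.induction_on with
  | empty =>
    intro t s ht hts hs hT
    refine dist_le_mul_sub_of_forall_Ioo hts (hg.mono (Icc_subset_Icc ht hs)) ?_
    intro t' s' ht' hts' hs'
    refine h t' s' (ht.trans ht'.le) hts' (hs'.le.trans hs) ?_
    rw [Set.disjoint_iff]
    intro u hu
    exact hT ⟨⟨ht'.trans_le hu.1.1, hu.1.2.trans_lt hs'⟩, hu.2⟩
  | @insert p T hp _ ih =>
    intro t s ht hts hs hT
    by_cases hpts : p ∈ Ioo t s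
    · have hsplit : ∀ t' s', Ioo t' s' ⊆ Ioo t s → p ∉ Ioo t' s' → Ioo t' s' ∩ S ⊆ T :=
        fun t' s' hsub hp' u hu =>
          (hT ⟨hsub hu.1, hu.2⟩).resolve_left (by rintro rfl; exact hp' hu.1)
      calc dist (g t) (g s) ≤ dist (g t) (g p) + dist (g p) (g s) := dist_triangle _ _ _
        _ ≤ C * (p - t) + C * (s - p) := add_le_add
            (ih t p ht hpts.1.le (hpts.2.le.trans hs)
              (hsplit t p (Ioo_subset_Ioo_right hpts.2.le) (fun h => h.2.false)))
            (ih p s (ht.trans hpts.1.le) hpts.2.le hs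
              (hsplit p s (Ioo_subset_Ioo_left hpts.1.le) (fun h => h.1.false)))
        _ = C * (s - t) := by ring
    · exact ih t s ht hts hs fun u hu =>
        (hT hu).resolve_left (by rintro rfl; exact hpts hu.1)

end Interval

theorem lipschitzWith_of_edist_le_of_segment_subset_compl {E F : Type*} [NormedAddCommGroup E]
    [NormedSpace ℝ E] [PseudoMetricSpace F] {f : E → F} {Θ : Set E} {L : NNReal}
    (hf : Continuous f) (hΘ : ∀ x y : E, (segment ℝ x y ∩ Θ).Finite)
    (h : ∀ x y, segment ℝ x y ⊆ Θᶜ → edist (f x) (f y) ≤ L * edist x y) :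
    LipschitzWith L f := by
  refine LipschitzWith.of_dist_le_mul fun x y => ?_
  rcases eq_or_ne x y with rfl | hxy
  · simp
  set γ : ℝ →ᵃ[ℝ] E := lineMap x y
  have hS : (γ ⁻¹' Θ ∩ Icc 0 1).Finite := by
    refine ((hΘ x y).preimage (lineMap_injective ℝ hxy).injOn).subset ?_
    rintro t ⟨htΘ, ht⟩
    exact ⟨lineMap_mem_segment ℝ x y ht, htΘ⟩
  have hγ : ∀ t s, 0 ≤ t → t ≤ s → s ≤ 1 → Disjoint (Icc t s) (γ ⁻¹' Θ ∩ Icc 0 1) →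
      dist (f (γ t)) (f (γ s)) ≤ L * dist x y * (s - t) := by
    intro t s ht hts hs hdisj
    have hseg : segment ℝ (γ t) (γ s) ⊆ Θᶜ := by
      rw [← image_segment, segment_eq_Icc hts]
      rintro _ ⟨u, hu, rfl⟩ hΘu
      exact hdisj.ne_of_mem hu ⟨hΘu, ht.trans hu.1, hu.2.trans hs⟩ rfl
    have hlip : dist (f (γ t)) (f (γ s)) ≤ L * dist (γ t) (γ s) := by
      have := h _ _ hseg
      rw [edist_nndist, edist_nndist] at this
      simp only [dist_nndist]
      exact_mod_cast this
    rw [dist_lineMap_lineMap, Real.dist_eq, abs_of_nonpos (sub_nonpos.2 hts)] at hlip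
    linarith
  simpa [γ] using dist_le_mul_sub_of_finite (g := f ∘ γ) hS zero_le_one
    (hf.comp (lineMap_continuous (R := ℝ))).continuousOn hγ

theorem stmt8 (d m : ℕ) (Θ : Set (EuclideanSpace ℝ (Fin d)))
    (f : EuclideanSpace ℝ (Fin d) → EuclideanSpace ℝ (Fin m)) (L : NNReal)
    (hcont : Continuous f)
    (hlip : ∀ x ∈ Θᶜ, ∀ y ∈ Θᶜ, edist (f x) (f y) ≤ L * intrinsicDist Θᶜ x y)
    (hseg : ∀ x y : EuclideanSpace ℝ (Fin d), (segment ℝ x y ∩ Θ).Finite) :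
    LipschitzWith L f := by
  refine lipschitzWith_of_edist_le_of_segment_subset_compl hcont hseg fun x y hxy => ?_
  calc edist (f x) (f y)
      ≤ L * intrinsicDist Θᶜ x y :=
        hlip x (hxy (left_mem_segment ℝ x y)) y (hxy (right_mem_segment ℝ x y))
    _ ≤ L * edist x y := by gcongr; exact intrinsicDist_le_edist_of_segment_subset hxy
end

section
/- The function f: ℝ² → ℝ given in polar coordinates by f(x) = ‖x‖·arg(x) (with arg taking values in (-π, π]) is not Lipschitz continuous on ℝ², but is intrinsic Lipschitz on ℝ² with the negative real half-axis {x ∈ ℝ²: x₁ < 0, x₂ = 0} removed. -/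
open Set

/-!
The function jumps by `2π‖z‖` across the negative real axis, so it is not even continuous there.

By the law of cosines and `cos θ ≤ 1 - 2θ²/π²` on `[-π, π]`, the function is `2π`-Lipschitz for
the Euclidean distance on every pair of points whose arguments differ by at most `π`. A curve in
the slit plane joining two points whose arguments differ by more than `π` has endpoints on
opposite sides of the real axis, so it meets the nonnegative real half-axis, at a point of
argument `0`; splitting the curve there bounds `|f x - f y|` by `2π` times its length.
-/

open Filter Topology Real

namespace Complex

theorem norm_sub_sq_eq_cos_arg_sub (x y : ℂ) :
    ‖x - y‖ ^ 2 = ‖x‖ ^ 2 + ‖y‖ ^ 2 - 2 * ‖x‖ * ‖y‖ * Real.cos (arg x - arg y) := by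
  have hx := norm_mul_cos_arg x
  have hy := norm_mul_cos_arg y
  have hx' := norm_mul_sin_arg x
  have hy' := norm_mul_sin_arg y
  simp only [Complex.sq_norm, normSq_apply, sub_re, sub_im, Real.cos_sub]
  linear_combination (2 * ‖y‖ * Real.cos (arg y)) * hx + 2 * x.re * hy
    + (2 * ‖y‖ * Real.sin (arg y)) * hx' + 2 * x.im * hy'

theorem min_norm_mul_abs_arg_sub_le {x y : ℂ} (h : |arg x - arg y| ≤ π) :
    min ‖x‖ ‖y‖ * |arg x - arg y| ≤ π / 2 * ‖x - y‖ := by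
  set θ := arg x - arg y
  have hmin : min ‖x‖ ‖y‖ ^ 2 ≤ ‖x‖ * ‖y‖ := by
    rw [sq]
    exact mul_le_mul (min_le_left _ _) (min_le_right _ _) (by positivity) (norm_nonneg x)
  refine (pow_le_pow_iff_left₀ (by positivity) (by positivity) two_ne_zero).1 ?_
  calc (min ‖x‖ ‖y‖ * |θ|) ^ 2 = min ‖x‖ ‖y‖ ^ 2 * θ ^ 2 := by rw [mul_pow, sq_abs]
    _ ≤ ‖x‖ * ‖y‖ * θ ^ 2 := by gcongr
    _ = π ^ 2 / 4 * (2 * ‖x‖ * ‖y‖ * (2 / π ^ 2 * θ ^ 2)) := by field_simp; ring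
    _ ≤ π ^ 2 / 4 * (2 * ‖x‖ * ‖y‖ * (1 - Real.cos θ)) := by
        gcongr; linarith [Real.cos_le_one_sub_mul_cos_sq h]
    _ ≤ π ^ 2 / 4 * ((‖x‖ - ‖y‖) ^ 2 + 2 * ‖x‖ * ‖y‖ * (1 - Real.cos θ)) := by
        gcongr; exact le_add_of_nonneg_left (sq_nonneg _)
    _ = (π / 2 * ‖x - y‖) ^ 2 := by rw [mul_pow, norm_sub_sq_eq_cos_arg_sub]; ring

theorem abs_norm_mul_arg_sub_le (x y : ℂ) :
    |‖x‖ * arg x - ‖y‖ * arg y| ≤ π * |‖x‖ - ‖y‖| + min ‖x‖ ‖y‖ * |arg x - arg y| := by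
  wlog hxy : ‖x‖ ≤ ‖y‖ generalizing x y
  · simpa only [abs_sub_comm, min_comm] using this y x (le_of_not_ge hxy)
  rw [min_eq_left hxy]
  calc |‖x‖ * arg x - ‖y‖ * arg y| = |(‖x‖ - ‖y‖) * arg y + ‖x‖ * (arg x - arg y)| := by
        ring_nf
    _ ≤ |‖x‖ - ‖y‖| * |arg y| + ‖x‖ * |arg x - arg y| := by
        grw [abs_add_le, abs_mul, abs_mul, abs_norm]
    _ ≤ π * |‖x‖ - ‖y‖| + ‖x‖ * |arg x - arg y| := by
        rw [mul_comm π]; gcongr; exact abs_arg_le_pi y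

theorem dist_norm_mul_arg_le {x y : ℂ} (h : |arg x - arg y| ≤ π) :
    dist (‖x‖ * arg x) (‖y‖ * arg y) ≤ 2 * π * dist x y := by
  rw [Real.dist_eq, dist_eq]
  calc |‖x‖ * arg x - ‖y‖ * arg y| ≤ π * |‖x‖ - ‖y‖| + min ‖x‖ ‖y‖ * |arg x - arg y| :=
        abs_norm_mul_arg_sub_le x y
    _ ≤ π * ‖x - y‖ + π / 2 * ‖x - y‖ := by
        grw [abs_norm_sub_norm_le x y, min_norm_mul_abs_arg_sub_le h]
    _ ≤ 2 * π * ‖x - y‖ := by nlinarith [pi_pos, norm_nonneg (x - y)]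

theorem edist_norm_mul_arg_le {x y : ℂ} (h : |arg x - arg y| ≤ π) :
    edist (‖x‖ * arg x) (‖y‖ * arg y) ≤ ENNReal.ofReal (2 * π) * edist x y := by
  rw [edist_dist, edist_dist, ← ENNReal.ofReal_mul (by positivity)]
  exact ENNReal.ofReal_le_ofReal (dist_norm_mul_arg_le h)

theorem not_continuousAt_norm_mul_arg {z : ℂ} (hre : z.re < 0) (him : z.im = 0) :
    ¬ ContinuousAt (fun w : ℂ => ‖w‖ * arg w) z := by
  intro hcont
  have : (𝓝[{w : ℂ | w.im < 0}] z).NeBot := by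
    rw [← mem_closure_iff_nhdsWithin_neBot, closure_setOfPred_im_lt]
    exact him.le
  have hbelow : Tendsto (fun w : ℂ => ‖w‖ * arg w) (𝓝[{w | w.im < 0}] z) (𝓝 (‖z‖ * -π)) :=
    continuous_norm.continuousWithinAt.tendsto.mul
      (tendsto_arg_nhdsWithin_im_neg_of_re_neg_of_im_zero hre him)
  have hpi : ‖z‖ * arg z = ‖z‖ * -π :=
    tendsto_nhds_unique (hcont.tendsto.mono_left nhdsWithin_le_nhds) hbelow
  rw [arg_eq_pi_iff.2 ⟨hre, him⟩] at hpi
  have hz : 0 < ‖z‖ := norm_pos_iff.2 fun h => by simp [h] at hre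
  nlinarith [pi_pos]

theorem exists_abs_arg_sub_le_pi {γ : ℝ → ℂ} {a b : ℝ} (hab : a ≤ b)
    (hγ : ContinuousOn γ (Icc a b)) (hA : MapsTo γ (Icc a b) {z : ℂ | ¬(z.re < 0 ∧ z.im = 0)}) :
    ∃ t ∈ Icc a b, |arg (γ a) - arg (γ t)| ≤ π ∧ |arg (γ t) - arg (γ b)| ≤ π := by
  by_cases h : |arg (γ a) - arg (γ b)| ≤ π
  · exact ⟨a, left_mem_Icc.2 hab, by simp [pi_pos.le], h⟩
  have ha := abs_le.1 (abs_arg_le_pi (γ a))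
  have hb := abs_le.1 (abs_arg_le_pi (γ b))
  have h0 : (0 : ℝ) ∈ uIcc (γ a).im (γ b).im := by
    rw [abs_le, not_and_or, not_le, not_le] at h
    rw [mem_uIcc]
    rcases h with h | h
    · exact .inl ⟨(arg_neg_iff.1 (by linarith)).le, arg_nonneg_iff.1 (by linarith)⟩
    · exact .inr ⟨(arg_neg_iff.1 (by linarith)).le, arg_nonneg_iff.1 (by linarith)⟩
  rw [← uIcc_of_le hab] at hγ hA
  obtain ⟨t, ht, him⟩ := intermediate_value_uIcc (continuous_im.comp_continuousOn hγ) h0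
  have harg : arg (γ t) = 0 := arg_eq_zero_iff.2 ⟨not_lt.1 fun hre => hA ht ⟨hre, him⟩, him⟩
  refine ⟨t, uIcc_of_le hab ▸ ht, ?_, ?_⟩ <;> simp [harg, abs_arg_le_pi]

end Complex

theorem edist_add_edist_le_eVariationOn {α E : Type*} [LinearOrder α] [PseudoEMetricSpace E]
    (f : α → E) {a t b : α} (hat : a ≤ t) (htb : t ≤ b) :
    edist (f a) (f t) + edist (f t) (f b) ≤ eVariationOn f (Icc a b) := by
  have hsplit := eVariationOn.Icc_add_Icc f (s := univ) hat htb (mem_univ t)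
  simp only [univ_inter] at hsplit
  rw [← hsplit]
  gcongr
  · exact eVariationOn.edist_le f (left_mem_Icc.2 hat) (right_mem_Icc.2 hat)
  · exact eVariationOn.edist_le f (left_mem_Icc.2 htb) (right_mem_Icc.2 htb)

theorem le_mul_intrinsicDist {E : Type*} [NormedAddCommGroup E] {A : Set E} {x y : E}
    {c : ENNReal} {K : NNReal} (hK : K ≠ 0)
    (h : ∀ γ : ℝ → E, ContinuousOn γ (Icc 0 1) → MapsTo γ (Icc 0 1) A → γ 0 = x → γ 1 = y →
      c ≤ K * eVariationOn γ (Icc 0 1)) :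
    c ≤ K * intrinsicDist A x y := by
  simpa only [intrinsicDist, ENNReal.mul_iInf_of_ne (ENNReal.coe_ne_zero.2 hK) ENNReal.coe_ne_top,
    le_iInf_iff] using h

/-- `f x = ‖x‖ · arg x` on `ℝ² ≅ ℂ` is not Lipschitz, but is intrinsic
Lipschitz on the plane with the negative real half-axis removed. -/
theorem stmt9 :
    (¬ ∃ K : NNReal, LipschitzWith K (fun z : ℂ => ‖z‖ * Complex.arg z)) ∧
    (∃ K : NNReal, ∀ x ∈ {z : ℂ | ¬(z.re < 0 ∧ z.im = 0)},
      ∀ y ∈ {z : ℂ | ¬(z.re < 0 ∧ z.im = 0)},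
        edist (‖x‖ * Complex.arg x) (‖y‖ * Complex.arg y)
          ≤ K * intrinsicDist {z : ℂ | ¬(z.re < 0 ∧ z.im = 0)} x y) := by
  constructor
  · rintro ⟨K, hK⟩
    exact Complex.not_continuousAt_norm_mul_arg (z := -1) (by simp) (by simp)
      hK.continuous.continuousAt
  refine ⟨(2 * π).toNNReal, fun x _ y _ => le_mul_intrinsicDist (by simp [pi_pos]) ?_⟩
  rintro γ hγ hA rfl rfl
  obtain ⟨t, ht, h0t, ht1⟩ := Complex.exists_abs_arg_sub_le_pi zero_le_one hγ hA
  calc edist (‖γ 0‖ * (γ 0).arg) (‖γ 1‖ * (γ 1).arg)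
      ≤ edist (‖γ 0‖ * (γ 0).arg) (‖γ t‖ * (γ t).arg)
        + edist (‖γ t‖ * (γ t).arg) (‖γ 1‖ * (γ 1).arg) := edist_triangle _ _ _
    _ ≤ ENNReal.ofReal (2 * π) * (edist (γ 0) (γ t) + edist (γ t) (γ 1)) := by
        rw [mul_add]
        exact add_le_add (Complex.edist_norm_mul_arg_le h0t) (Complex.edist_norm_mul_arg_le ht1)
    _ ≤ ENNReal.ofReal (2 * π) * eVariationOn γ (Icc 0 1) := by
        gcongr; exact edist_add_edist_le_eVariationOn γ ht.1 ht.2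
end
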